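/- Let μ be a Borel probability measure on ℝ with ∫ y dμ = 0 and finite fourth moment; write E_p = ∫ y^p dμ for p = 2, 3, 4. Let γ ∈ (0,1), δ = 1 − γ. Then for all natural numbers 0 < l₁ < l₂ < l₃, q ≥ 2, and every x ∈ ℝ, the iterated kernel integral ∫∫∫∫ y₀·y₁·y₂·y₃ K_{l₃−l₂}(y₂, dy₃) K_{l₂−l₁}(y₁, dy₂) K_{l₁}(y₀, dy₁) K_q(x, dy₀) equals δ^{l₃}(δ^q x⁴ + (1−δ^q)E₄) + δ^{l₃−l₁}(1−δ^{l₁}) E₃ δ^q x + δ^{l₃−l₂+l₁}(1−δ^{l₂−l₁}) E₂ (δ^q x² + (1−δ^q)E₂). That is, E(m̄_i m̄_{i+l₁} m̄_{i+l₂} m̄_{i+l₃} | m̄_{i−q} = x) has this closed form. -/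

import Mathlib

/-!
Integrating against `K_h(x, ·)` is the affine map `f ↦ (1 - δ^h) ∫ f dμ + δ^h f(x)`. Integrating
out `y₃, y₂, y₁, y₀` in turn therefore maps each monomial in the integration variable to a
polynomial of degree at most four in the preceding one, and because `μ` is centred a first
moment only ever contributes its `δ^h x` part.
-/

open MeasureTheory

/-- The `h`-step renewal kernel of one MSMD multiplier with renewal distribution `μ` and
switching probability `γ`: `K_h(x, ·) = (1 - (1-γ)^h)·μ + (1-γ)^h·δ_x`. -/
noncomputable def renewalKernel (μ : Measure ℝ) (γ : ℝ) (h : ℕ) (x : ℝ) : Measure ℝ :=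
  ENNReal.ofReal (1 - (1 - γ) ^ h) • μ + ENNReal.ofReal ((1 - γ) ^ h) • Measure.dirac x

lemma integrable_pow_of_le {μ : Measure ℝ} [IsFiniteMeasure μ] {p q : ℕ} (hpq : p ≤ q)
    (hq : Integrable (fun y : ℝ => y ^ q) μ) : Integrable (fun y : ℝ => y ^ p) μ := by
  have hq' : Integrable (fun y : ℝ => ‖y‖ ^ (q : ℝ)) μ := by
    simpa [Real.rpow_natCast, ← abs_pow] using hq.norm
  have hp' := integrable_norm_rpow_of_le aestronglyMeasurable_id (Nat.cast_nonneg p)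
    (Nat.cast_nonneg q) (Nat.cast_le.2 hpq) hq'
  refine (integrable_norm_iff (by fun_prop)).1 ?_
  simpa [Real.rpow_natCast, ← abs_pow] using hp'

section RenewalKernel

variable {μ : Measure ℝ} {γ : ℝ} {h : ℕ} {x : ℝ}

lemma integrable_renewalKernel {f : ℝ → ℝ} (hf : Integrable f μ) :
    Integrable f (renewalKernel μ γ h x) :=
  (hf.smul_measure ENNReal.ofReal_ne_top).add_measure
    ((integrable_dirac enorm_lt_top).smul_measure ENNReal.ofReal_ne_top)

lemma integral_add_renewalKernel {f g : ℝ → ℝ} (hf : Integrable f μ) (hg : Integrable g μ) :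
    ∫ y, f y + g y ∂renewalKernel μ γ h x =
      ∫ y, f y ∂renewalKernel μ γ h x + ∫ y, g y ∂renewalKernel μ γ h x :=
  integral_add (integrable_renewalKernel hf) (integrable_renewalKernel hg)

variable (hγ₀ : 0 ≤ γ) (hγ₁ : γ ≤ 1)
include hγ₀ hγ₁

lemma integral_renewalKernel {f : ℝ → ℝ} (hf : Integrable f μ) :
    ∫ y, f y ∂renewalKernel μ γ h x = (1 - (1 - γ) ^ h) * ∫ y, f y ∂μ + (1 - γ) ^ h * f x := by
  have hδ₀ : 0 ≤ (1 - γ) ^ h := pow_nonneg (by linarith) h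
  have hδ₁ : (1 - γ) ^ h ≤ 1 := pow_le_one₀ (by linarith) (by linarith)
  rw [renewalKernel, integral_add_measure (hf.smul_measure ENNReal.ofReal_ne_top)
      ((integrable_dirac enorm_lt_top).smul_measure ENNReal.ofReal_ne_top),
    integral_smul_measure, integral_smul_measure, integral_dirac,
    ENNReal.toReal_ofReal (by linarith), ENNReal.toReal_ofReal hδ₀, smul_eq_mul, smul_eq_mul]

lemma integral_mul_renewalKernel_of_integral_eq_zero (hmean : ∫ y, y ∂μ = 0)
    (hi : Integrable (fun y : ℝ => y) μ) (h : ℕ) (x c : ℝ) :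
    ∫ y, c * y ∂renewalKernel μ γ h x = c * ((1 - γ) ^ h * x) := by
  rw [integral_renewalKernel hγ₀ hγ₁ (hi.const_mul c), integral_const_mul, hmean]
  ring

lemma integral_mul_pow_renewalKernel {p : ℕ} (hi : Integrable (fun y : ℝ => y ^ p) μ)
    (h : ℕ) (x c : ℝ) :
    ∫ y, c * y ^ p ∂renewalKernel μ γ h x =
      c * ((1 - (1 - γ) ^ h) * ∫ y, y ^ p ∂μ + (1 - γ) ^ h * x ^ p) := by
  rw [integral_renewalKernel hγ₀ hγ₁ (hi.const_mul c), integral_const_mul]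
  ring

end RenewalKernel

section CenteredFourPoint

variable {μ : Measure ℝ} [IsFiniteMeasure μ] {γ : ℝ} (hγ₀ : 0 ≤ γ) (hγ₁ : γ ≤ 1)
  (hmean : ∫ y, y ∂μ = 0) (hmom : Integrable (fun y : ℝ => y ^ 4) μ)
include hγ₀ hγ₁ hmean hmom

lemma integral_mul_mul_mul_renewalKernel (a b c : ℕ) (y₀ : ℝ) :
    ∫ y₁, (∫ y₂, (∫ y₃, y₀ * y₁ * y₂ * y₃ ∂renewalKernel μ γ c y₂)
      ∂renewalKernel μ γ b y₁) ∂renewalKernel μ γ a y₀ =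
      (1 - γ) ^ (c + b) * (1 - (1 - γ) ^ a) * (∫ y, y ^ 3 ∂μ) * y₀ +
        (1 - γ) ^ (c + a) * (1 - (1 - γ) ^ b) * (∫ y, y ^ 2 ∂μ) * y₀ ^ 2 +
        (1 - γ) ^ (c + b + a) * y₀ ^ 4 := by
  have i₁ : Integrable (fun y : ℝ => y) μ := by
    simpa using integrable_pow_of_le (p := 1) (by norm_num) hmom
  have i₃ : Integrable (fun y : ℝ => y ^ 3) μ := integrable_pow_of_le (by norm_num) hmom
  have K₁ := integral_mul_renewalKernel_of_integral_eq_zero hγ₀ hγ₁ hmean i₁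
  have integrate_y₃ (y₁ y₂ : ℝ) : ∫ y₃, y₀ * y₁ * y₂ * y₃ ∂renewalKernel μ γ c y₂ =
      y₀ * y₁ * (1 - γ) ^ c * y₂ ^ 2 := by
    rw [K₁]; ring
  have integrate_y₂ (y₁ : ℝ) : ∫ y₂, y₀ * y₁ * (1 - γ) ^ c * y₂ ^ 2 ∂renewalKernel μ γ b y₁ =
      y₀ * (1 - γ) ^ c * (1 - (1 - γ) ^ b) * (∫ y, y ^ 2 ∂μ) * y₁ +
        y₀ * (1 - γ) ^ c * (1 - γ) ^ b * y₁ ^ 3 := by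
    rw [integral_mul_pow_renewalKernel hγ₀ hγ₁ (integrable_pow_of_le (by norm_num) hmom)]; ring
  simp only [integrate_y₃, integrate_y₂]
  rw [integral_add_renewalKernel (i₁.const_mul _) (i₃.const_mul _), K₁,
    integral_mul_pow_renewalKernel hγ₀ hγ₁ i₃, pow_add, pow_add, pow_add]
  ring

end CenteredFourPoint

theorem centered_chain_fourth_cross_moment_conditional_general
    (μ : Measure ℝ) [IsProbabilityMeasure μ]
    (hmean : ∫ y, y ∂μ = 0) (hmom : Integrable (fun y : ℝ => y ^ 4) μ)
    (E₂ E₃ E₄ : ℝ) (hE₂ : E₂ = ∫ y, y ^ 2 ∂μ) (hE₃ : E₃ = ∫ y, y ^ 3 ∂μ)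
    (hE₄ : E₄ = ∫ y, y ^ 4 ∂μ)
    (γ : ℝ) (hγ : γ ∈ Set.Ioo (0 : ℝ) 1) (δ : ℝ) (hδ : δ = 1 - γ)
    (l₁ l₂ l₃ q : ℕ) (hl₁₂ : l₁ < l₂) (hl₂₃ : l₂ < l₃)
    (x : ℝ) :
    ∫ y₀, (∫ y₁, (∫ y₂, (∫ y₃, y₀ * y₁ * y₂ * y₃
        ∂(renewalKernel μ γ (l₃ - l₂) y₂))
      ∂(renewalKernel μ γ (l₂ - l₁) y₁))
      ∂(renewalKernel μ γ l₁ y₀))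
      ∂(renewalKernel μ γ q x) =
      δ ^ l₃ * (δ ^ q * x ^ 4 + (1 - δ ^ q) * E₄) +
        δ ^ (l₃ - l₁) * (1 - δ ^ l₁) * E₃ * (δ ^ q * x) +
        δ ^ (l₃ - l₂ + l₁) * (1 - δ ^ (l₂ - l₁)) * E₂ *
          (δ ^ q * x ^ 2 + (1 - δ ^ q) * E₂) := by
  obtain ⟨hγ₀, hγ₁⟩ := Set.Ioo_subset_Icc_self hγ
  have i₁ : Integrable (fun y : ℝ => y) μ := by
    simpa using integrable_pow_of_le (p := 1) (by norm_num) hmom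
  have i₂ : Integrable (fun y : ℝ => y ^ 2) μ := integrable_pow_of_le (by norm_num) hmom
  have hl₃₁ : l₃ - l₂ + (l₂ - l₁) = l₃ - l₁ := Nat.sub_add_sub_cancel hl₂₃.le hl₁₂.le
  have hl₃ : l₃ - l₁ + l₁ = l₃ := Nat.sub_add_cancel (hl₁₂.trans hl₂₃).le
  simp only [integral_mul_mul_mul_renewalKernel hγ₀ hγ₁ hmean hmom, hl₃₁, hl₃, ← hE₂, ← hE₃,
    ← hδ]
  rw [integral_add_renewalKernel ((i₁.const_mul _).fun_add (i₂.const_mul _)) (hmom.const_mul _),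
    integral_add_renewalKernel (i₁.const_mul _) (i₂.const_mul _),
    integral_mul_renewalKernel_of_integral_eq_zero hγ₀ hγ₁ hmean i₁,
    integral_mul_pow_renewalKernel hγ₀ hγ₁ i₂, integral_mul_pow_renewalKernel hγ₀ hγ₁ hmom,
    ← hE₂, ← hE₄, ← hδ]
  ring

/-- the conditional fourth cross-moment of the centered multiplier chain:
for `0 < l₁ < l₂ < l₃`, `q ≥ 2` and every `x`,
`E(m̄_i m̄_{i+l₁} m̄_{i+l₂} m̄_{i+l₃} | m̄_{i−q} = x)
  = δ^{l₃}(δ^q x⁴ + (1−δ^q)E₄) + δ^{l₃−l₁}(1−δ^{l₁})E₃ δ^q x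
    + δ^{l₃−l₂+l₁}(1−δ^{l₂−l₁})E₂(δ^q x² + (1−δ^q)E₂)`,
where `E_p = ∫ y^p dμ` and `δ = 1 − γ`. -/
theorem centered_chain_fourth_cross_moment_conditional
    (μ : Measure ℝ) [IsProbabilityMeasure μ]
    (hmean : ∫ y, y ∂μ = 0) (hmom : Integrable (fun y : ℝ => y ^ 4) μ)
    (E₂ E₃ E₄ : ℝ) (hE₂ : E₂ = ∫ y, y ^ 2 ∂μ) (hE₃ : E₃ = ∫ y, y ^ 3 ∂μ)
    (hE₄ : E₄ = ∫ y, y ^ 4 ∂μ)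
    (γ : ℝ) (hγ : γ ∈ Set.Ioo (0 : ℝ) 1) (δ : ℝ) (hδ : δ = 1 - γ)
    (l₁ l₂ l₃ q : ℕ) (hl₁ : 0 < l₁) (hl₁₂ : l₁ < l₂) (hl₂₃ : l₂ < l₃) (hq : 2 ≤ q)
    (x : ℝ) :
    ∫ y₀, (∫ y₁, (∫ y₂, (∫ y₃, y₀ * y₁ * y₂ * y₃
        ∂(renewalKernel μ γ (l₃ - l₂) y₂))
      ∂(renewalKernel μ γ (l₂ - l₁) y₁))
      ∂(renewalKernel μ γ l₁ y₀))
      ∂(renewalKernel μ γ q x) =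
      δ ^ l₃ * (δ ^ q * x ^ 4 + (1 - δ ^ q) * E₄) +
        δ ^ (l₃ - l₁) * (1 - δ ^ l₁) * E₃ * (δ ^ q * x) +
        δ ^ (l₃ - l₂ + l₁) * (1 - δ ^ (l₂ - l₁)) * E₂ *
          (δ ^ q * x ^ 2 + (1 - δ ^ q) * E₂) :=
  centered_chain_fourth_cross_moment_conditional_general μ hmean hmom E₂ E₃ E₄ hE₂ hE₃ hE₄ γ hγ δ hδ
    l₁ l₂ l₃ q hl₁₂ hl₂₃ x
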